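/- arXiv:math/0509559 — 4 statements merged into one kernel-verified Lean document; each statement's English description precedes it below -/
import Mathlib

section
/- The measure μ on [0,1] with density dμ/dλ(x) = 1/x with respect to Lebesgue measure λ is invariant under the Farey map T. -/
/-!
The inverse branches of the Farey map are `y ↦ y / (1 + y)`, onto `(0, 1/2]`, and
`y ↦ 1 / (1 + y)`, onto `(1/2, 1]`. By the change of variables formula the density `1 / x`
pulls back along them to `1 / (y (1 + y))` and `1 / (1 + y)`, which sum to `1 / y`: the density
is a fixed point of the transfer operator of `T`.
-/

open MeasureTheory

/-- The Farey map. -/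
noncomputable def fareyMap (x : ℝ) : ℝ := if x ≤ 1 / 2 then x / (1 - x) else 1 / x - 1

/-- The infinite invariant measure `dμ = (1/x) dλ` on `[0,1]`. -/
noncomputable def fareyMeasure : Measure ℝ :=
  (volume.restrict (Set.Icc (0 : ℝ) 1)).withDensity fun x => ENNReal.ofReal (1 / x)

open Set
open scoped ENNReal

local notation "ν" => volume.withDensity fun x : ℝ => ENNReal.ofReal (1 / x)

theorem withDensity_image_eq_lintegral_abs_deriv_mul {ρ : ℝ → ℝ≥0∞} {s : Set ℝ}
    {f f' : ℝ → ℝ} (hs : MeasurableSet s) (hf' : ∀ x ∈ s, HasDerivWithinAt f (f' x) s x)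
    (hf : InjOn f s) :
    volume.withDensity ρ (f '' s) = ∫⁻ x in s, ENNReal.ofReal |f' x| * ρ (f x) := by
  rw [withDensity_apply', lintegral_image_eq_lintegral_abs_deriv_mul hs hf' hf]

theorem measurable_fareyMap : Measurable fareyMap :=
  Measurable.ite (measurableSet_le measurable_id measurable_const)
    (measurable_id.div (measurable_const.sub measurable_id))
    ((measurable_const.div measurable_id).sub measurable_const)

theorem fareyMeasure_eq_restrict : fareyMeasure = Measure.restrict ν (Ioc 0 1) := by
  rw [fareyMeasure, ← restrict_withDensity measurableSet_Icc]
  exact Measure.restrict_congr_set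
    ((withDensity_absolutelyContinuous _ _).ae_eq Ioc_ae_eq_Icc.symm)

theorem fareyMap_div_one_add {y : ℝ} (hy₀ : 0 ≤ y) (hy₁ : y ≤ 1) :
    fareyMap (y / (1 + y)) = y := by
  have h : y / (1 + y) ≤ 1 / 2 := by rw [div_le_iff₀ (by linarith)]; linarith
  rw [fareyMap, if_pos h]
  field_simp
  ring

theorem fareyMap_inv_one_add {y : ℝ} (hy₀ : 0 ≤ y) (hy₁ : y < 1) :
    fareyMap (1 + y)⁻¹ = y := by
  have h : ¬ (1 + y)⁻¹ ≤ 1 / 2 := by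
    rw [not_le, one_div, inv_lt_inv₀ (by norm_num) (by linarith)]; linarith
  rw [fareyMap, if_neg h, one_div, inv_inv, add_sub_cancel_left]

theorem image_div_one_add_Ioc : (fun y : ℝ => y / (1 + y)) '' Ioc 0 1 = Ioc 0 (1 / 2) := by
  ext x
  constructor
  · rintro ⟨y, ⟨hy₀, hy₁⟩, rfl⟩
    have h : (0 : ℝ) < 1 + y := by linarith
    exact ⟨div_pos hy₀ h, by rw [div_le_iff₀ h]; linarith⟩
  · rintro ⟨hx₀, hx₁⟩
    have h : (0 : ℝ) < 1 - x := by linarith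
    refine ⟨x / (1 - x), ⟨div_pos hx₀ h, by rw [div_le_one h]; linarith⟩, ?_⟩
    field_simp
    ring

theorem image_inv_one_add_Ico : (fun y : ℝ => (1 + y)⁻¹) '' Ico 0 1 = Ioc (1 / 2) 1 := by
  ext x
  constructor
  · rintro ⟨y, ⟨hy₀, hy₁⟩, rfl⟩
    rw [one_div]
    exact ⟨inv_strictAnti₀ (by linarith) (by linarith), inv_le_one_of_one_le₀ (by linarith)⟩
  · rintro ⟨hx₀, hx₁⟩
    have hx : 0 < x := by linarith
    refine ⟨x⁻¹ - 1, ⟨?_, ?_⟩, by simp⟩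
    · rw [sub_nonneg]; exact one_le_inv₀ hx |>.mpr hx₁
    · rw [sub_lt_iff_lt_add, one_add_one_eq_two, inv_lt_comm₀ hx two_pos]
      linarith

theorem fareyMap_preimage_inter_Ioc_zero_half (A : Set ℝ) :
    fareyMap ⁻¹' A ∩ Ioc 0 (1 / 2) = (fun y : ℝ => y / (1 + y)) '' (A ∩ Ioc 0 1) := by
  rw [← image_div_one_add_Ioc, LeftInvOn.image_inter']
  exact fun y hy => fareyMap_div_one_add hy.1.le hy.2

theorem fareyMap_preimage_inter_Ioc_half_one (A : Set ℝ) :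
    fareyMap ⁻¹' A ∩ Ioc (1 / 2) 1 = (fun y : ℝ => (1 + y)⁻¹) '' (A ∩ Ico 0 1) := by
  rw [← image_inv_one_add_Ico, LeftInvOn.image_inter']
  exact fun y hy => fareyMap_inv_one_add hy.1 hy.2

theorem withDensity_one_div_image_div_one_add {s : Set ℝ} (hs : MeasurableSet s)
    (hs₁ : s ⊆ Ioi (-1)) :
    ν ((fun y : ℝ => y / (1 + y)) '' s) = ∫⁻ y in s, ENNReal.ofReal (1 / (y * (1 + y))) := by
  have hpos : ∀ y ∈ s, (0 : ℝ) < 1 + y := fun y hy => neg_lt_iff_pos_add'.mp (hs₁ hy)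
  have hderiv :
      ∀ y ∈ s, HasDerivWithinAt (fun y : ℝ => y / (1 + y)) (1 / (1 + y) ^ 2) s y := by
    intro y hy
    have h := ((hasDerivAt_id' y).div ((hasDerivAt_id' y).const_add 1) (hpos y hy).ne')
    exact h.hasDerivWithinAt.congr_deriv (by ring)
  have hinj : InjOn (fun y : ℝ => y / (1 + y)) s := by
    intro y hy z hz h
    have := (hpos y hy).ne'
    have := (hpos z hz).ne'
    field_simp at h
    linarith
  rw [withDensity_image_eq_lintegral_abs_deriv_mul hs hderiv hinj]
  refine setLIntegral_congr_fun hs fun y hy => ?_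
  have h := hpos y hy
  rw [← ENNReal.ofReal_mul (abs_nonneg _), abs_of_pos (by positivity)]
  congr 1
  field_simp

theorem withDensity_one_div_image_inv_one_add {s : Set ℝ} (hs : MeasurableSet s)
    (hs₁ : s ⊆ Ioi (-1)) :
    ν ((fun y : ℝ => (1 + y)⁻¹) '' s) = ∫⁻ y in s, ENNReal.ofReal (1 / (1 + y)) := by
  have hpos : ∀ y ∈ s, (0 : ℝ) < 1 + y := fun y hy => neg_lt_iff_pos_add'.mp (hs₁ hy)
  have hderiv :
      ∀ y ∈ s, HasDerivWithinAt (fun y : ℝ => (1 + y)⁻¹) (-1 / (1 + y) ^ 2) s y :=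
    fun y hy => (((hasDerivAt_id' y).const_add 1).inv (hpos y hy).ne').hasDerivWithinAt
  have hinj : InjOn (fun y : ℝ => (1 + y)⁻¹) s := fun y _ z _ h => by
    simpa using inv_injective h
  rw [withDensity_image_eq_lintegral_abs_deriv_mul hs hderiv hinj]
  refine setLIntegral_congr_fun hs fun y hy => ?_
  have h := hpos y hy
  rw [← ENNReal.ofReal_mul (abs_nonneg _), abs_div, abs_neg, abs_one,
    abs_of_pos (by positivity)]
  congr 1
  field_simp

theorem lintegral_add_lintegral_eq_withDensity_one_div {s : Set ℝ} (hs : MeasurableSet s)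
    (hs₀ : s ⊆ Ioi 0) :
    (∫⁻ y in s, ENNReal.ofReal (1 / (y * (1 + y)))) +
      ∫⁻ y in s, ENNReal.ofReal (1 / (1 + y)) = ν s := by
  rw [← lintegral_add_left (by fun_prop), withDensity_apply _ hs]
  refine setLIntegral_congr_fun hs fun y hy => ?_
  have h : (0 : ℝ) < y := hs₀ hy
  rw [← ENNReal.ofReal_add (by positivity) (by positivity)]
  congr 1
  field_simp

/-- The measure with density `1/x` with respect to Lebesgue measure on `[0,1]` is
invariant under the Farey map. -/
theorem fareyMap_measurePreserving :
    MeasurePreserving fareyMap fareyMeasure fareyMeasure := by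
  refine ⟨measurable_fareyMap, Measure.ext fun A hA => ?_⟩
  have hsplit : fareyMap ⁻¹' A ∩ Ioc 0 1 =
      fareyMap ⁻¹' A ∩ Ioc 0 (1 / 2) ∪ fareyMap ⁻¹' A ∩ Ioc (1 / 2) 1 := by
    rw [← inter_union_distrib_left, Ioc_union_Ioc_eq_Ioc (by norm_num) (by norm_num)]
  have hdisj :
      Disjoint (fareyMap ⁻¹' A ∩ Ioc 0 (1 / 2)) (fareyMap ⁻¹' A ∩ Ioc (1 / 2) 1) :=
    (Ioc_disjoint_Ioc_of_le le_rfl).mono inter_subset_right inter_subset_right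
  have hIco : ∫⁻ y in A ∩ Ico 0 1, ENNReal.ofReal (1 / (1 + y)) =
      ∫⁻ y in A ∩ Ioc 0 1, ENNReal.ofReal (1 / (1 + y)) :=
    setLIntegral_congr (ae_eq_refl A |>.inter Ico_ae_eq_Ioc)
  rw [Measure.map_apply measurable_fareyMap hA, fareyMeasure_eq_restrict,
    Measure.restrict_apply' measurableSet_Ioc, Measure.restrict_apply' measurableSet_Ioc,
    hsplit,
    measure_union hdisj ((measurable_fareyMap hA).inter measurableSet_Ioc),
    fareyMap_preimage_inter_Ioc_zero_half, fareyMap_preimage_inter_Ioc_half_one,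
    withDensity_one_div_image_div_one_add (hA.inter measurableSet_Ioc)
      (inter_subset_right.trans (Ioc_subset_Ioi_self.trans (Ioi_subset_Ioi (by norm_num)))),
    withDensity_one_div_image_inv_one_add (hA.inter measurableSet_Ico)
      (inter_subset_right.trans (Ico_subset_Ici_self.trans (Ici_subset_Ioi.mpr (by norm_num)))),
    hIco]
  exact lintegral_add_lintegral_eq_withDensity_one_div (hA.inter measurableSet_Ioc)
    (inter_subset_right.trans Ioc_subset_Ioi_self)
end

section
/- The map on irrationals in (0,1) induced by the Farey map on the set A_1 = (1/2,1] via the first entry time coincides with the Gauss map: for irrational x, S(x) := T^{e(x)+1}(x) = 1/x - ⌊1/x⌋ = G(x), where e(x) = min{k ≥ 0 : T^k(x) ∈ (1/2,1]}. -/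
/-- The Gauss map `G(x) = 1/x - ⌊1/x⌋` (with `G 0 = 0`). -/
noncomputable def gaussMap (x : ℝ) : ℝ := if x = 0 then 0 else Int.fract (1 / x)

/-- The first entry time into `A₁ = (1/2, 1]` under the Farey map. -/
noncomputable def entryTime (x : ℝ) : ℕ :=
  sInf {k : ℕ | fareyMap^[k] x ∈ Set.Ioc (1 / 2 : ℝ) 1}

/-! On `(0, 1]`, the Farey map acts by `x ↦ x / (1 - x)` until the orbit enters `(1/2, 1]`, so
`T^k x = x / (1 - k x)` as long as `(k + 1) x ≤ 1`, and the orbit enters `(1/2, 1]` exactly at the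
step `m` with `(m + 1) x ≤ 1 < (m + 2) x`, that is at `m = ⌊1/x⌋ - 1`. One more application of
`y ↦ 1/y - 1` then gives `(1 - m x)/x - 1 = 1/x - ⌊1/x⌋`. -/

lemma div_one_sub_mul_le_half_iff {x : ℝ} {k : ℕ} (hkx : k * x < 1) :
    x / (1 - k * x) ≤ 1 / 2 ↔ (k + 2) * x ≤ 1 := by
  rw [div_le_div_iff₀ (by linarith) two_pos]
  constructor <;> intro h <;> linarith

namespace fareyMap

variable {x y : ℝ} {k m : ℕ}

lemma apply_of_le_half (hy : y ≤ 1 / 2) : fareyMap y = y / (1 - y) := if_pos hy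

lemma apply_of_half_lt (hy : 1 / 2 < y) : fareyMap y = 1 / y - 1 := if_neg hy.not_ge

lemma iterate_eq_div_one_sub_mul (hx : 0 < x) (hk : (k + 1) * x ≤ 1) :
    fareyMap^[k] x = x / (1 - k * x) := by
  induction k with
  | zero => simp
  | succ k ih =>
    push_cast at hk ⊢
    have hkx : (k : ℝ) * x < 1 := by nlinarith
    have hle : x / (1 - k * x) ≤ 1 / 2 := (div_one_sub_mul_le_half_iff hkx).2 (by linarith)
    rw [Function.iterate_succ_apply', ih (by nlinarith), apply_of_le_half hle]
    have hk0 : 1 - (k : ℝ) * x ≠ 0 := by linarith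
    rw [one_sub_div hk0, div_div_div_cancel_right₀ hk0]
    ring_nf

lemma iterate_mem_Ioc_iff (hx : 0 < x) (hk : (k + 1) * x ≤ 1) :
    fareyMap^[k] x ∈ Set.Ioc (1 / 2) 1 ↔ 1 < (k + 2) * x := by
  have hkx : (k : ℝ) * x < 1 := by nlinarith
  have hle_one : x / (1 - k * x) ≤ 1 := (div_le_one (by linarith)).2 (by linarith)
  rw [iterate_eq_div_one_sub_mul hx hk, Set.mem_Ioc, ← not_le,
    div_one_sub_mul_le_half_iff hkx, not_le]
  exact and_iff_left hle_one

lemma entryTime_eq (hx : 0 < x) (h₁ : (m + 1) * x ≤ 1) (h₂ : 1 < (m + 2) * x) :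
    entryTime x = m := by
  have hm : fareyMap^[m] x ∈ Set.Ioc (1 / 2) 1 := (iterate_mem_Ioc_iff hx h₁).2 h₂
  refine le_antisymm (Nat.sInf_le hm) (le_csInf ⟨m, hm⟩ fun k hk => ?_)
  by_contra! hkm
  have hkm' : (k : ℝ) + 1 ≤ m := by exact_mod_cast hkm
  have hk := (iterate_mem_Ioc_iff hx (by nlinarith)).1 hk
  nlinarith

lemma iterate_succ_eq_one_div_sub (hx : 0 < x) (h₁ : (m + 1) * x ≤ 1) (h₂ : 1 < (m + 2) * x) :
    fareyMap^[m + 1] x = 1 / x - (m + 1) := by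
  have hm : fareyMap^[m] x ∈ Set.Ioc (1 / 2) 1 := (iterate_mem_Ioc_iff hx h₁).2 h₂
  rw [Function.iterate_succ_apply', apply_of_half_lt hm.1, iterate_eq_div_one_sub_mul hx h₁]
  have hmx : 1 - (m : ℝ) * x ≠ 0 := by nlinarith
  field_simp
  ring

end fareyMap

lemma exists_floor_one_div_eq_succ {x : ℝ} (hx₀ : 0 < x) (hx₁ : x ≤ 1) :
    ∃ m : ℕ, (m + 1) * x ≤ 1 ∧ 1 < (m + 2) * x ∧ ⌊1 / x⌋ = m + 1 := by
  have hinv : 1 ≤ 1 / x := by rwa [le_div_iff₀ hx₀, one_mul]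
  obtain ⟨m, hm⟩ := Nat.exists_eq_add_of_le' (Nat.le_floor (by exact_mod_cast hinv) : 1 ≤ ⌊1 / x⌋₊)
  have hle : ((m + 1 : ℕ) : ℝ) ≤ 1 / x := hm ▸ Nat.floor_le (by linarith)
  have hlt : 1 / x < ((m + 1 : ℕ) : ℝ) + 1 := hm ▸ Nat.lt_floor_add_one _
  push_cast at hle hlt
  refine ⟨m, (le_div_iff₀ hx₀).1 hle, (div_lt_iff₀ hx₀).1 (by linarith), ?_⟩
  rw [← Int.natCast_floor_eq_floor (by linarith), hm]
  push_cast
  rfl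

theorem induced_fareyMap_eq_gaussMap_general (x : ℝ)
    (hx01 : x ∈ Set.Ioo (0 : ℝ) 1) :
    fareyMap^[entryTime x + 1] x = 1 / x - ⌊1 / x⌋ ∧
      fareyMap^[entryTime x + 1] x = gaussMap x := by
  obtain ⟨hx₀, hx₁⟩ := hx01
  obtain ⟨m, h₁, h₂, hfloor⟩ := exists_floor_one_div_eq_succ hx₀ hx₁.le
  have hS : fareyMap^[entryTime x + 1] x = 1 / x - ⌊1 / x⌋ := by
    rw [fareyMap.entryTime_eq hx₀ h₁ h₂, fareyMap.iterate_succ_eq_one_div_sub hx₀ h₁ h₂, hfloor]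
    push_cast
    rfl
  refine ⟨hS, ?_⟩
  rw [hS, gaussMap, if_neg hx₀.ne', Int.self_sub_floor]

/-- The map induced by the Farey map on `A₁ = (1/2,1]` via the first entry time
coincides with the Gauss map on the irrationals of `(0,1)`:
`T^{e(x)+1}(x) = 1/x - ⌊1/x⌋ = G(x)`. -/
theorem induced_fareyMap_eq_gaussMap (x : ℝ) (hx : Irrational x)
    (hx01 : x ∈ Set.Ioo (0 : ℝ) 1) :
    fareyMap^[entryTime x + 1] x = 1 / x - ⌊1 / x⌋ ∧
      fareyMap^[entryTime x + 1] x = gaussMap x :=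
  induced_fareyMap_eq_gaussMap_general x hx01
end

section
/- If f : (0,1) → ℝ is a twice differentiable probability density with respect to μ with f' > 0 and f'' ≤ 0, then T̂f, where T̂ is the transfer operator of the Farey map, is also twice differentiable with (T̂f)' > 0 and (T̂f)'' ≤ 0 on (0,1). -/
open MeasureTheory

/-- The transfer operator of the Farey map with respect to `dμ = (1/x)dλ`. -/
noncomputable def fareyTransfer (f : ℝ → ℝ) (x : ℝ) : ℝ :=
  (f (x / (x + 1)) + x * f (1 / (x + 1))) / (x + 1)

/-!
With `s x = 1/(x+1)` and `φ t = (1 - t) f(t)`, one has `T̂f = h ∘ s` with `h t = φ t + φ (1 - t)`: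
the two inverse branches of the Farey map are `s` and `1 - s`. Since `f' > 0` and `f'' ≤ 0`, the
function `φ'' = (1 - t) f'' - 2 f'` is negative on `(0,1)`, so `h` is strictly concave and, being
symmetric about `1/2`, decreasing on `(1/2, 1) ⊇ s((0,1))`. As `s` is decreasing and convex,
`h ∘ s` is increasing and concave.
-/

open Set Filter Topology

section SecondDerivative

variable {f g : ℝ → ℝ} {x : ℝ}

theorem ContDiffAt.differentiableAt_deriv (hf : ContDiffAt ℝ 2 f x) :
    DifferentiableAt ℝ (deriv f) x :=
  (hf.derivWithin (m := 1) (by norm_num)).differentiableAt one_ne_zero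

theorem deriv_deriv_add (hf : ContDiffAt ℝ 2 f x) (hg : ContDiffAt ℝ 2 g x) :
    deriv (deriv fun y => f y + g y) x = deriv (deriv f) x + deriv (deriv g) x := by
  simpa only [iteratedDeriv_succ, iteratedDeriv_zero] using iteratedDeriv_fun_add hf hg

theorem deriv_deriv_comp_const_sub (a : ℝ) :
    deriv (deriv fun y => f (a - y)) x = deriv (deriv f) (a - x) := by
  have h : deriv (fun y => f (a - y)) = fun y => -deriv f (a - y) :=
    funext fun y => deriv_comp_const_sub ..
  rw [h, deriv.fun_neg, deriv_comp_const_sub, neg_neg]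

theorem deriv_deriv_one_sub_mul (hf : ContDiffAt ℝ 2 f x) :
    deriv (deriv fun y => (1 - y) * f y) x = (1 - x) * deriv (deriv f) x - 2 * deriv f x := by
  have h1 : ContDiffAt ℝ 2 (fun y : ℝ => 1 - y) x := by fun_prop
  have := iteratedDeriv_fun_mul h1 hf
  simp only [iteratedDeriv_succ, iteratedDeriv_zero, Finset.sum_range_succ, Finset.range_one,
    Finset.sum_singleton, Nat.choose_zero_right, Nat.choose_succ_self_right, Nat.choose_self,
    deriv_const_sub_id', deriv_const'] at this
  rw [this]
  ring

theorem deriv_deriv_comp (hf : ContDiffAt ℝ 2 f (g x)) (hg : ContDiffAt ℝ 2 g x) :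
    deriv (deriv (f ∘ g)) x =
      deriv (deriv f) (g x) * deriv g x ^ 2 + deriv f (g x) * deriv (deriv g) x := by
  have hchain : deriv (f ∘ g) =ᶠ[𝓝 x] fun y => deriv f (g y) * deriv g y := by
    filter_upwards [hg.continuousAt.eventually (hf.eventually (by simp)), hg.eventually (by simp)]
      with y hfy hgy
    exact deriv_comp y (hfy.differentiableAt (by simp)) (hgy.differentiableAt (by simp))
  have hg' := (hg.differentiableAt (by simp)).hasDerivAt
  rw [hchain.deriv_eq]
  refine ((hf.differentiableAt_deriv.hasDerivAt.comp x hg').fun_mul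
    hg.differentiableAt_deriv.hasDerivAt).deriv.trans ?_
  simp only [Function.comp_apply]
  ring

theorem deriv_deriv_comp_nonpos (hf : ContDiffAt ℝ 2 f (g x)) (hg : ContDiffAt ℝ 2 g x)
    (hf' : deriv f (g x) ≤ 0) (hf'' : deriv (deriv f) (g x) ≤ 0)
    (hg'' : 0 ≤ deriv (deriv g) x) :
    deriv (deriv (f ∘ g)) x ≤ 0 := by
  rw [deriv_deriv_comp hf hg]
  exact add_nonpos (mul_nonpos_of_nonpos_of_nonneg hf'' (sq_nonneg _))
    (mul_nonpos_of_nonpos_of_nonneg hf' hg'')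

end SecondDerivative

section Symmetrization

variable {φ : ℝ → ℝ}

theorem ContDiffOn.add_comp_one_sub {n : WithTop ℕ∞} (hφ : ContDiffOn ℝ n φ (Ioo 0 1)) :
    ContDiffOn ℝ n (fun t => φ t + φ (1 - t)) (Ioo 0 1) :=
  hφ.add (hφ.comp (contDiffOn_const.sub contDiffOn_id) fun t ht =>
    ⟨by linarith [ht.2], by linarith [ht.1]⟩)

theorem deriv_add_comp_one_sub_neg (hφ : ContDiffOn ℝ 2 φ (Ioo 0 1))
    (hφ'' : ∀ t ∈ Ioo (0 : ℝ) 1, deriv (deriv φ) t < 0) {t : ℝ} (ht : t ∈ Ioo (1 / 2 : ℝ) 1) :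
    deriv (fun t => φ t + φ (1 - t)) t < 0 := by
  have hmem : t ∈ Ioo (0 : ℝ) 1 := ⟨by linarith [ht.1], ht.2⟩
  have hmem' : 1 - t ∈ Ioo (0 : ℝ) 1 := ⟨by linarith [ht.2], by linarith [ht.1]⟩
  have hdiff : ∀ u ∈ Ioo (0 : ℝ) 1, DifferentiableAt ℝ φ u := fun u hu =>
    (hφ.contDiffAt (isOpen_Ioo.mem_nhds hu)).differentiableAt (by norm_num)
  have hanti : StrictAntiOn (deriv φ) (Ioo 0 1) :=
    strictAntiOn_of_deriv_neg (convex_Ioo 0 1)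
      (hφ.deriv_of_isOpen isOpen_Ioo (m := 1) (by norm_num)).continuousOn
      (by rwa [interior_Ioo])
  have hreflect : DifferentiableAt ℝ (fun y => φ (1 - y)) t :=
    (hdiff _ hmem').comp t (differentiableAt_id.const_sub 1)
  rw [deriv_fun_add (hdiff t hmem) hreflect, deriv_comp_const_sub, ← sub_eq_add_neg, sub_neg]
  exact hanti hmem' hmem (by linarith [ht.1])

theorem deriv_deriv_add_comp_one_sub_neg (hφ : ContDiffOn ℝ 2 φ (Ioo 0 1))
    (hφ'' : ∀ t ∈ Ioo (0 : ℝ) 1, deriv (deriv φ) t < 0) {t : ℝ} (ht : t ∈ Ioo (0 : ℝ) 1) :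
    deriv (deriv fun t => φ t + φ (1 - t)) t < 0 := by
  have hmem' : 1 - t ∈ Ioo (0 : ℝ) 1 := ⟨by linarith [ht.2], by linarith [ht.1]⟩
  have hC : ∀ u ∈ Ioo (0 : ℝ) 1, ContDiffAt ℝ 2 φ u := fun u hu =>
    hφ.contDiffAt (isOpen_Ioo.mem_nhds hu)
  have hreflect : ContDiffAt ℝ 2 (fun y => φ (1 - y)) t :=
    (hC _ hmem').comp t (contDiffAt_const.sub contDiffAt_id)
  rw [deriv_deriv_add (hC t ht) hreflect, deriv_deriv_comp_const_sub]
  linarith [hφ'' t ht, hφ'' _ hmem']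

end Symmetrization

theorem inv_add_one_mem_Ioo {x : ℝ} (hx : x ∈ Ioo (0 : ℝ) 1) : (x + 1)⁻¹ ∈ Ioo (1 / 2 : ℝ) 1 := by
  refine ⟨?_, inv_lt_one_of_one_lt₀ (by linarith [hx.1])⟩
  rw [one_div, inv_lt_inv₀ two_pos (by linarith [hx.1])]
  linarith [hx.2]

theorem deriv_inv_add_one {x : ℝ} : deriv (fun y : ℝ => (y + 1)⁻¹) x = -((x + 1) ^ 2)⁻¹ := by
  rw [deriv_comp_add_const, deriv_inv]

theorem deriv_deriv_inv_add_one {x : ℝ} :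
    deriv (deriv fun y : ℝ => (y + 1)⁻¹) x = 2 * ((x + 1) ^ 3)⁻¹ := by
  have h : deriv (fun y : ℝ => (y + 1)⁻¹) = fun y => deriv Inv.inv (y + 1) :=
    funext fun y => deriv_comp_add_const ..
  have h2 := iter_deriv_inv (𝕜 := ℝ) 2 (x + 1)
  simp only [Function.iterate_succ, Function.iterate_zero, Function.comp_apply, id_eq] at h2
  rw [h, deriv_comp_add_const, h2]
  norm_num [zpow_neg]

noncomputable def fareyBranchTerm (f : ℝ → ℝ) (t : ℝ) : ℝ := (1 - t) * f t

theorem fareyTransfer_eq (f : ℝ → ℝ) {x : ℝ} (hx : x + 1 ≠ 0) :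
    fareyTransfer f x = fareyBranchTerm f (x + 1)⁻¹ + fareyBranchTerm f (1 - (x + 1)⁻¹) := by
  have h : 1 - (x + 1)⁻¹ = x / (x + 1) := by field_simp; ring
  simp only [fareyTransfer, fareyBranchTerm, h]
  field_simp
  ring

theorem deriv_deriv_fareyBranchTerm_neg {f : ℝ → ℝ} {t : ℝ} (hf : ContDiffAt ℝ 2 f t)
    (ht : t < 1) (hf' : 0 < deriv f t) (hf'' : deriv (deriv f) t ≤ 0) :
    deriv (deriv (fareyBranchTerm f)) t < 0 := by
  unfold fareyBranchTerm
  rw [deriv_deriv_one_sub_mul hf]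
  nlinarith

theorem fareyTransfer_preserves_class_D_general (f : ℝ → ℝ)
    (hf_smooth : ContDiffOn ℝ 2 f (Set.Ioo (0 : ℝ) 1))
    (hf_deriv : ∀ x ∈ Set.Ioo (0 : ℝ) 1, 0 < deriv f x)
    (hf_deriv2 : ∀ x ∈ Set.Ioo (0 : ℝ) 1, deriv (deriv f) x ≤ 0) :
    ContDiffOn ℝ 2 (fareyTransfer f) (Set.Ioo (0 : ℝ) 1) ∧
      (∀ x ∈ Set.Ioo (0 : ℝ) 1, 0 < deriv (fareyTransfer f) x) ∧
      (∀ x ∈ Set.Ioo (0 : ℝ) 1, deriv (deriv (fareyTransfer f)) x ≤ 0) := by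
  set h : ℝ → ℝ := fun t => fareyBranchTerm f t + fareyBranchTerm f (1 - t)
  set s : ℝ → ℝ := fun x => (x + 1)⁻¹
  have hT : EqOn (fareyTransfer f) (h ∘ s) (Ioo 0 1) := fun x hx =>
    fareyTransfer_eq f (by linarith [hx.1])
  have hφ : ContDiffOn ℝ 2 (fareyBranchTerm f) (Ioo 0 1) :=
    (contDiffOn_const.sub contDiffOn_id).mul hf_smooth
  have hφ'' : ∀ t ∈ Ioo (0 : ℝ) 1, deriv (deriv (fareyBranchTerm f)) t < 0 := fun t ht =>
    deriv_deriv_fareyBranchTerm_neg (hf_smooth.contDiffAt (isOpen_Ioo.mem_nhds ht)) ht.2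
      (hf_deriv t ht) (hf_deriv2 t ht)
  have hs : ContDiffOn ℝ 2 s (Ioo 0 1) :=
    (contDiffOn_id.add contDiffOn_const).inv fun x hx => (by linarith [hx.1] : 0 < x + 1).ne'
  have hs_maps : MapsTo s (Ioo 0 1) (Ioo 0 1) := fun x hx =>
    Ioo_subset_Ioo_left (by norm_num) (inv_add_one_mem_Ioo hx)
  refine ⟨(hφ.add_comp_one_sub.comp hs hs_maps).congr hT, fun x hx => ?_, fun x hx => ?_⟩
  all_goals
    have hhx := hφ.add_comp_one_sub.contDiffAt (isOpen_Ioo.mem_nhds (hs_maps hx))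
    have hsx := hs.contDiffAt (isOpen_Ioo.mem_nhds hx)
    have hx1 : 0 < x + 1 := by linarith [hx.1]
    have hh' := deriv_add_comp_one_sub_neg hφ hφ'' (inv_add_one_mem_Ioo hx)
  · rw [hT.deriv isOpen_Ioo hx, deriv_comp x (hhx.differentiableAt two_ne_zero)
      (hsx.differentiableAt two_ne_zero), deriv_inv_add_one]
    exact mul_pos_of_neg_of_neg hh' (by simp only [neg_lt_zero]; positivity)
  · rw [(hT.deriv isOpen_Ioo).deriv isOpen_Ioo hx]
    exact deriv_deriv_comp_nonpos hhx hsx hh'.le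
      (deriv_deriv_add_comp_one_sub_neg hφ hφ'' (hs_maps hx)).le
      (by rw [deriv_deriv_inv_add_one]; positivity)

/-- If `f` is a twice differentiable probability density w.r.t. `μ` with `f' > 0` and
`f'' ≤ 0` on `(0,1)`, then so is `T̂f`. -/
theorem fareyTransfer_preserves_class_D (f : ℝ → ℝ)
    (hf_nonneg : ∀ x ∈ Set.Ioo (0 : ℝ) 1, 0 ≤ f x)
    (hf_density : ∫ x, f x ∂fareyMeasure = 1)
    (hf_smooth : ContDiffOn ℝ 2 f (Set.Ioo (0 : ℝ) 1))
    (hf_deriv : ∀ x ∈ Set.Ioo (0 : ℝ) 1, 0 < deriv f x)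
    (hf_deriv2 : ∀ x ∈ Set.Ioo (0 : ℝ) 1, deriv (deriv f) x ≤ 0) :
    ContDiffOn ℝ 2 (fareyTransfer f) (Set.Ioo (0 : ℝ) 1) ∧
      (∀ x ∈ Set.Ioo (0 : ℝ) 1, 0 < deriv (fareyTransfer f) x) ∧
      (∀ x ∈ Set.Ioo (0 : ℝ) 1, deriv (deriv (fareyTransfer f)) x ≤ 0) :=
  fareyTransfer_preserves_class_D_general f hf_smooth hf_deriv hf_deriv2
end

section
/- Define for irrational x ∈ (0,1) and n ∈ ℕ: X_n(x) = max{S_k(x) : S_k(x) ≤ n, k ∈ ℕ_0}, where S_k = a_1 + ⋯ + a_k are continued fraction digit sums (S_0 = 0). Let Z_n be the last visit time to A_1 = (1/2,1] under the Farey map T before time n: Z_n(x) = max{k ≤ n : T^k(x) ∈ A_1} for x ∈ K_n = ⋃_{k=0}^n T^{-k}A_1, and 0 otherwise. Then for all irrational x: X_n(x) = 1 + Z_{n-1}(x) if x ∈ K_{n-1}, and X_n(x) = 0 otherwise. -/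
/-- The digit sum `S_k = a_1 + ⋯ + a_k` of continued fraction digits, `a_{i+1}(x) =
⌊1 / Gⁱ(x)⌋`. -/
noncomputable def cfDigitSum (x : ℝ) (k : ℕ) : ℕ :=
  ∑ i ∈ Finset.range k, (⌊1 / (gaussMap^[i] x)⌋).toNat

/-- `X_n(x) = max{S_k(x) : S_k(x) ≤ n, k ∈ ℕ₀}`. -/
noncomputable def Xproc (n : ℕ) (x : ℝ) : ℕ :=
  sSup {m : ℕ | m ≤ n ∧ ∃ k : ℕ, cfDigitSum x k = m}

/-- `K_n = ⋃_{k=0}^n T^{-k} A₁` with `A₁ = (1/2,1]`. -/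
noncomputable def Kset (n : ℕ) : Set ℝ :=
  ⋃ k ∈ Finset.range (n + 1), fareyMap^[k] ⁻¹' Set.Ioc (1 / 2 : ℝ) 1

open Classical in
/-- `Z_n(x)`: the last visit time to `A₁ = (1/2,1]` before time `n` under the Farey
map (and `0` off `K_n`). -/
noncomputable def Zproc (n : ℕ) (x : ℝ) : ℕ :=
  if x ∈ Kset n then sSup {k : ℕ | k ≤ n ∧ fareyMap^[k] x ∈ Set.Ioc (1 / 2 : ℝ) 1}
  else 0

/-!
With `a = ⌊x⁻¹⌋₊`, the Farey map lowers `x⁻¹` by one as long as `x ≤ 1/2`, so the orbit of `x`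
avoids `A₁ = (1/2, 1]` at the times `0, …, a - 2`, enters it at time `a - 1`, and `T^a x = G x`:
the Gauss map is the jump transformation of `T` associated with `A₁`. Iterating, the orbit of `x`
visits `A₁` exactly at the times `S_k - 1` with `k ≥ 1`, so the positive digit sums up to `n` are
the successors of the visit times up to `n - 1`, and taking maxima gives `X_n = 1 + Z_{n-1}`.
-/

open Set Function

structure IsJumpTransformation {α : Type*} (f g : α → α) (A s : Set α) (r : α → ℕ) : Prop where
  mapsTo : MapsTo g s s
  pos : ∀ y ∈ s, 0 < r y
  iterate_eq : ∀ y ∈ s, f^[r y] y = g y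
  iterate_mem_iff_of_lt : ∀ y ∈ s, ∀ j < r y, f^[j] y ∈ A ↔ j + 1 = r y

namespace IsJumpTransformation

variable {α : Type*} {f g : α → α} {A s : Set α} {r : α → ℕ} {x : α}

theorem iterate_sum_eq (h : IsJumpTransformation f g A s r) (hx : x ∈ s) (k : ℕ) :
    f^[∑ i ∈ Finset.range k, r (g^[i] x)] x = g^[k] x := by
  induction k with
  | zero => rfl
  | succ k ih =>
    rw [Finset.sum_range_succ, add_comm, iterate_add_apply, ih,
      h.iterate_eq _ (h.mapsTo.iterate k hx), ← iterate_succ_apply' g]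

theorem exists_sum_le_lt (h : IsJumpTransformation f g A s r) (hx : x ∈ s) (j : ℕ) :
    ∃ k, ∑ i ∈ Finset.range k, r (g^[i] x) ≤ j ∧ j < ∑ i ∈ Finset.range (k + 1), r (g^[i] x) := by
  induction j with
  | zero => exact ⟨0, le_rfl, by simpa using h.pos x hx⟩
  | succ j ih =>
    obtain ⟨k, hkj, hjk⟩ := ih
    rcases (Nat.succ_le_of_lt hjk).lt_or_eq with hlt | heq
    · exact ⟨k, by omega, hlt⟩
    · refine ⟨k + 1, heq.ge, ?_⟩
      have := h.pos _ (h.mapsTo.iterate (k + 1) hx)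
      rw [Finset.sum_range_succ _ (k + 1)]
      omega

theorem iterate_mem_iff_exists_sum_eq (h : IsJumpTransformation f g A s r) (hx : x ∈ s) (j : ℕ) :
    f^[j] x ∈ A ↔ ∃ k, ∑ i ∈ Finset.range k, r (g^[i] x) = j + 1 := by
  constructor
  · intro hj
    obtain ⟨k, hkj, hjk⟩ := h.exists_sum_le_lt hx j
    rw [Finset.sum_range_succ] at hjk
    obtain ⟨t, rfl⟩ := Nat.exists_eq_add_of_le hkj
    rw [add_comm, iterate_add_apply, h.iterate_sum_eq hx,
      h.iterate_mem_iff_of_lt _ (h.mapsTo.iterate k hx) t (by omega)] at hj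
    exact ⟨k + 1, by rw [Finset.sum_range_succ]; omega⟩
  · rintro ⟨_ | k, hk⟩
    · simp at hk
    rw [Finset.sum_range_succ] at hk
    have hgk := h.mapsTo.iterate k hx
    have hpos := h.pos _ hgk
    obtain rfl : j = (r (g^[k] x) - 1) + ∑ i ∈ Finset.range k, r (g^[i] x) := by omega
    rw [iterate_add_apply, h.iterate_sum_eq hx, h.iterate_mem_iff_of_lt _ hgk _ (by omega)]
    omega

end IsJumpTransformation

lemma mem_Ioc_half_one_iff {y : ℝ} (hy : 0 < y) : y ∈ Ioc (1 / 2 : ℝ) 1 ↔ y⁻¹ ∈ Ico 1 2 := by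
  rw [mem_Ioc, mem_Ico, one_le_inv₀ hy, inv_lt_comm₀ hy two_pos, one_div]
  exact and_comm

lemma fareyMap_of_half_lt {x : ℝ} (hx : 1 / 2 < x) : fareyMap x = x⁻¹ - 1 := by
  rw [fareyMap, if_neg hx.not_ge, one_div]

lemma inv_fareyMap_of_le_half {x : ℝ} (hx₀ : 0 < x) (hx : x ≤ 1 / 2) :
    (fareyMap x)⁻¹ = x⁻¹ - 1 := by
  have : 1 - x ≠ 0 := by linarith
  rw [fareyMap, if_pos hx]
  field_simp

lemma inv_iterate_fareyMap {x : ℝ} {j : ℕ} (hj : (j : ℝ) + 1 ≤ x⁻¹) :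
    (fareyMap^[j] x)⁻¹ = x⁻¹ - j := by
  induction j with
  | zero => simp
  | succ j ih =>
    push_cast at hj ⊢
    have hinv := ih (by linarith)
    have hpos : 0 < fareyMap^[j] x := inv_pos.mp (by linarith)
    have hhalf : fareyMap^[j] x ≤ 1 / 2 := by
      rw [← inv_le_inv₀ (by norm_num) hpos]
      norm_num
      linarith
    rw [iterate_succ_apply', inv_fareyMap_of_le_half hpos hhalf, hinv]
    ring

lemma natFloor_inv_bounds {x : ℝ} (hx : Irrational x) (hx01 : x ∈ Ioo (0 : ℝ) 1) :
    1 ≤ ⌊x⁻¹⌋₊ ∧ (⌊x⁻¹⌋₊ : ℝ) < x⁻¹ ∧ x⁻¹ < ⌊x⁻¹⌋₊ + 1 :=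
  ⟨Nat.le_floor (by simpa using (one_le_inv₀ hx01.1).mpr hx01.2.le),
    (Nat.floor_le (inv_nonneg.mpr hx01.1.le)).lt_of_ne (hx.inv.ne_nat _).symm,
    Nat.lt_floor_add_one _⟩

lemma gaussMap_eq {x : ℝ} (hx : 0 < x) : gaussMap x = x⁻¹ - ⌊x⁻¹⌋₊ := by
  rw [gaussMap, if_neg hx.ne', Int.fract, one_div,
    natCast_floor_eq_intCast_floor (inv_nonneg.mpr hx.le)]

lemma cfDigitSum_eq (x : ℝ) (k : ℕ) :
    cfDigitSum x k = ∑ i ∈ Finset.range k, ⌊(gaussMap^[i] x)⁻¹⌋₊ := by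
  simp only [cfDigitSum, Int.floor_toNat, one_div]

theorem isJumpTransformation_fareyMap_gaussMap :
    IsJumpTransformation fareyMap gaussMap (Ioc (1 / 2) 1) {x | Irrational x ∧ x ∈ Ioo 0 1}
      (fun y ↦ ⌊y⁻¹⌋₊) where
  mapsTo := by
    rintro x ⟨hx, hx01⟩
    obtain ⟨-, hlt, hlt'⟩ := natFloor_inv_bounds hx hx01
    rw [gaussMap_eq hx01.1]
    exact ⟨hx.inv.sub_natCast _, sub_pos.mpr hlt, sub_lt_iff_lt_add'.mpr hlt'⟩
  pos := fun x ⟨hx, hx01⟩ ↦ (natFloor_inv_bounds hx hx01).1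
  iterate_eq := by
    rintro x ⟨hx, hx01⟩
    obtain ⟨hone, hlt, hlt'⟩ := natFloor_inv_bounds hx hx01
    obtain ⟨b, hb⟩ := Nat.exists_eq_add_of_le' hone
    have hb' : (b : ℝ) + 1 = ⌊x⁻¹⌋₊ := by exact_mod_cast hb.symm
    have hinv := inv_iterate_fareyMap (x := x) (j := b) (by linarith)
    have hpos : 0 < fareyMap^[b] x := inv_pos.mp (by linarith)
    have hA := (mem_Ioc_half_one_iff hpos).mpr (by rw [hinv]; constructor <;> linarith)
    rw [hb, iterate_succ_apply', fareyMap_of_half_lt hA.1, hinv, gaussMap_eq hx01.1, ← hb']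
    ring
  iterate_mem_iff_of_lt := by
    rintro x ⟨hx, hx01⟩ j hj
    obtain ⟨-, hlt, hlt'⟩ := natFloor_inv_bounds hx hx01
    have hj' : (j : ℝ) + 1 ≤ ⌊x⁻¹⌋₊ := by exact_mod_cast hj
    have hinv := inv_iterate_fareyMap (x := x) (j := j) (by linarith)
    have hpos : 0 < fareyMap^[j] x := inv_pos.mp (by linarith)
    rw [mem_Ioc_half_one_iff hpos, hinv, mem_Ico]
    constructor
    · rintro ⟨-, h2⟩
      have : ⌊x⁻¹⌋₊ < j + 2 := by exact_mod_cast (show (⌊x⁻¹⌋₊ : ℝ) < j + 2 by linarith)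
      omega
    · intro h
      have h' : (j : ℝ) + 1 = ⌊x⁻¹⌋₊ := by exact_mod_cast h
      constructor <;> linarith

lemma mem_Kset_iff {x : ℝ} {n : ℕ} :
    x ∈ Kset n ↔ ∃ j ≤ n, fareyMap^[j] x ∈ Ioc (1 / 2 : ℝ) 1 := by
  simp only [Kset, mem_iUnion, Finset.mem_range, Nat.lt_succ_iff, mem_preimage, exists_prop]

theorem iterate_fareyMap_mem_Ioc_iff {x : ℝ} (hx : Irrational x) (hx01 : x ∈ Ioo 0 1) (j : ℕ) :
    fareyMap^[j] x ∈ Ioc (1 / 2 : ℝ) 1 ↔ ∃ k, cfDigitSum x k = j + 1 := by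
  simp only [cfDigitSum_eq]
  exact isJumpTransformation_fareyMap_gaussMap.iterate_mem_iff_exists_sum_eq ⟨hx, hx01⟩ j

theorem setOf_cfDigitSum_le_succ {x : ℝ} (hx : Irrational x) (hx01 : x ∈ Ioo 0 1) (n : ℕ) :
    {m | m ≤ n + 1 ∧ ∃ k, cfDigitSum x k = m} =
      insert 0 ((· + 1) '' {j | j ≤ n ∧ fareyMap^[j] x ∈ Ioc (1 / 2 : ℝ) 1}) := by
  ext (_ | m)
  · simpa using ⟨0, rfl⟩
  · simp [-mem_Ioc, -one_div, iterate_fareyMap_mem_Ioc_iff hx hx01]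

lemma sSup_insert_zero_image_succ {B : Set ℕ} {b : ℕ} (hB : IsGreatest B b) :
    sSup (insert 0 ((· + 1) '' B)) = b + 1 := by
  simpa using (((monotone_id.add_const 1).map_isGreatest hB).insert 0).csSup_eq

/-- Lemma 3 of the paper: for irrational `x ∈ (0,1)`, `X_n(x) = 1 + Z_{n-1}(x)` if
`x ∈ K_{n-1}`, and `X_n(x) = 0` otherwise. -/
theorem Xproc_eq_one_add_Zproc (x : ℝ) (hx : Irrational x)
    (hx01 : x ∈ Set.Ioo (0 : ℝ) 1) (n : ℕ) (hn : 1 ≤ n) :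
    (x ∈ Kset (n - 1) → Xproc n x = 1 + Zproc (n - 1) x) ∧
      (x ∉ Kset (n - 1) → Xproc n x = 0) := by
  obtain ⟨n, rfl⟩ := Nat.exists_eq_add_of_le' hn
  set B := {j | j ≤ n ∧ fareyMap^[j] x ∈ Ioc (1 / 2 : ℝ) 1}
  have hX : Xproc (n + 1) x = sSup (insert 0 ((· + 1) '' B)) :=
    congrArg sSup (setOf_cfDigitSum_le_succ hx hx01 n)
  rw [Nat.add_sub_cancel, hX]
  refine ⟨fun hK ↦ ?_, fun hK ↦ ?_⟩
  · have hB : B.Nonempty := mem_Kset_iff.mp hK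
    have hBdd : BddAbove B := ⟨n, fun _ hj ↦ hj.1⟩
    rw [Zproc, if_pos hK, add_comm,
      sSup_insert_zero_image_succ ⟨Nat.sSup_mem hB hBdd, fun _ hj ↦ le_csSup hBdd hj⟩]
  · have hB : B = ∅ := eq_empty_iff_forall_notMem.mpr fun j hj ↦ hK (mem_Kset_iff.mpr ⟨j, hj⟩)
    rw [hB, image_empty, insert_empty_eq, csSup_singleton]
end
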